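/- arXiv:2208.00412 — 5 statements merged into one kernel-verified Lean document; each statement's English description precedes it below -/
import Mathlib

section
/- The partition function P is well-defined and produces a partition of ℝ≥0: given clock valuations 0 = μ₀ < μ₁ < ⋯ < μₙ with distinct integer floors among the non-integer values, the intervals g₀,…,gₙ defined by the four cases of P are pairwise disjoint, their union is ℝ≥0, and μᵢ ∈ gᵢ for each 0 ≤ i ≤ n. -/
/-- A real number is an integer clock value (a natural number). -/
def IsIntVal (x : ℝ) : Prop := ∃ m : ℕ, x = m

open Classical in
/-- The partition function `P` of the paper: given clock valuations
`μ₀ < μ₁ < ⋯ < μₙ` (with `μₙ₊₁ = ∞`), it returns the intervals `g₀,…,gₙ`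
defined by the four cases distinguishing whether each `μᵢ`, `μᵢ₊₁` is an
integer or not. -/
noncomputable def Pfun (n : ℕ) (μ : Fin (n + 1) → ℝ) : Fin (n + 1) → Set ℝ := fun i =>
  if h : (i : ℕ) < n then
    let a := μ i
    let b := μ ⟨(i : ℕ) + 1, by omega⟩
    if IsIntVal a then
      if IsIntVal b then Set.Ico a b else Set.Icc a ((⌊b⌋ : ℤ) : ℝ)
    else
      if IsIntVal b then Set.Ioo ((⌊a⌋ : ℤ) : ℝ) b
      else Set.Ioc ((⌊a⌋ : ℤ) : ℝ) ((⌊b⌋ : ℤ) : ℝ)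
  else
    if IsIntVal (μ i) then Set.Ici (μ i) else Set.Ioi ((⌊μ i⌋ : ℤ) : ℝ)

/-!
Write `Rᵢ` for `[μᵢ, ∞)` if `μᵢ` is an integer and `(⌊μᵢ⌋, ∞)` otherwise, and `Rₙ₊₁ = ∅`.
Then `gᵢ = Rᵢ \ Rᵢ₊₁` in all four cases. The rays decrease with `i`, so differences of
consecutive rays are pairwise disjoint and telescope to `R₀ = [0, ∞)`. Finally `μᵢ ∈ Rᵢ`
because `⌊μᵢ⌋ < μᵢ` for non-integral `μᵢ ≥ 0`, and `μᵢ ∉ Rᵢ₊₁` because `μᵢ < μᵢ₊₁`, where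
two non-integral neighbours need distinct floors to give `μᵢ < ⌊μᵢ⌋ + 1 ≤ ⌊μᵢ₊₁⌋`.
-/

open Set Function

theorem Antitone.pairwise_disjoint_on_sdiff_succ {α : Type*} {s : ℕ → Set α} (hs : Antitone s) :
    Pairwise (Disjoint on fun k => s k \ s (k + 1)) :=
  (pairwise_disjoint_on _).2 fun _ _ hij =>
    disjoint_sdiff_self_left.mono_right (sdiff_subset.trans (hs hij))

theorem Antitone.iUnion_fin_sdiff_succ {α : Type*} {s : ℕ → Set α} (hs : Antitone s) (n : ℕ) :
    ⋃ k : Fin n, s k \ s (k + 1) = s 0 \ s n := by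
  suffices ⋃ k < n, s k \ s (k + 1) = s 0 \ s n by
    rw [← this]; ext x; simp [Fin.exists_iff]
  induction n with
  | zero => simp
  | succ n ih =>
    rw [biUnion_lt_succ, ih, sdiff_union_sdiff_cancel (hs (Nat.zero_le n)) (hs n.le_succ)]

noncomputable def clockRay (a : ℝ) : Set ℝ :=
  open Classical in if IsIntVal a then Ici a else Ioi (⌊a⌋ : ℝ)

theorem IsIntVal.le_floor {a b : ℝ} (ha : IsIntVal a) (hab : a ≤ b) : a ≤ ⌊b⌋ := by
  obtain ⟨m, rfl⟩ := ha
  exact_mod_cast Int.le_floor.2 (by exact_mod_cast hab)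

theorem floor_lt_of_not_isIntVal {a : ℝ} (h0 : 0 ≤ a) (ha : ¬ IsIntVal a) : (⌊a⌋ : ℝ) < a := by
  refine (Int.floor_le a).lt_of_ne fun h => ha ⟨⌊a⌋.toNat, ?_⟩
  exact h.symm.trans (by exact_mod_cast (Int.toNat_of_nonneg (Int.floor_nonneg.2 h0)).symm)

theorem clockRay_zero : clockRay 0 = Ici 0 := by
  simp [clockRay, show IsIntVal 0 from ⟨0, by simp⟩]

theorem antitone_clockRay : Antitone clockRay := by
  intro a b hab
  by_cases ha : IsIntVal a <;> by_cases hb : IsIntVal b <;>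
    simp only [clockRay, ha, hb, if_true, if_false]
  · exact Ici_subset_Ici.2 hab
  · exact Ioi_subset_Ici (ha.le_floor hab)
  · have hab' : a < b := hab.lt_of_ne fun h => ha (h ▸ hb)
    exact Ici_subset_Ioi.2 ((Int.floor_le a).trans_lt hab')
  · exact Ioi_subset_Ioi (by exact_mod_cast Int.floor_le_floor hab)

theorem mem_clockRay_self {a : ℝ} (h0 : 0 ≤ a) : a ∈ clockRay a := by
  by_cases ha : IsIntVal a <;> simp only [clockRay, ha, if_true, if_false]
  · exact mem_Ici.2 le_rfl
  · exact floor_lt_of_not_isIntVal h0 ha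

theorem notMem_clockRay {a b : ℝ} (hab : a < b)
    (hfloor : ¬ IsIntVal a → ¬ IsIntVal b → ⌊a⌋ ≠ ⌊b⌋) :
    a ∉ clockRay b := by
  by_cases hb : IsIntVal b <;>
    simp only [clockRay, hb, if_true, if_false, mem_Ici, mem_Ioi, not_le, not_lt]
  · exact hab
  by_cases ha : IsIntVal a
  · exact ha.le_floor hab.le
  · have hlt : ⌊a⌋ < ⌊b⌋ := (Int.floor_le_floor hab.le).lt_of_ne (hfloor ha hb)
    calc a ≤ ⌊a⌋ + 1 := (Int.lt_floor_add_one a).le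
      _ ≤ ⌊b⌋ := by exact_mod_cast hlt

/-- `clockRays n μ k` is the ray of `μ k`, extended by `∅` past the last index, so that
`Pfun n μ i` is the difference of consecutive rays also for `i = n`. -/
noncomputable def clockRays (n : ℕ) (μ : Fin (n + 1) → ℝ) (k : ℕ) : Set ℝ :=
  if h : k < n + 1 then clockRay (μ ⟨k, h⟩) else ∅

section clockRays

variable {n : ℕ} {μ : Fin (n + 1) → ℝ}

theorem clockRays_val (i : Fin (n + 1)) : clockRays n μ i = clockRay (μ i) := by
  simp [clockRays, i.isLt]

theorem antitone_clockRays (hμ : Monotone μ) : Antitone (clockRays n μ) := by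
  intro k l hkl
  by_cases hl : l < n + 1
  · simp only [clockRays, hl, lt_of_le_of_lt hkl hl, dite_true]
    exact antitone_clockRay (hμ (Fin.mk_le_mk.2 hkl))
  · simp [clockRays, hl]

theorem pfun_eq_clockRays_sdiff (i : Fin (n + 1)) :
    Pfun n μ i = clockRays n μ i \ clockRays n μ (i + 1) := by
  rw [clockRays_val]
  by_cases hi : (i : ℕ) < n
  · have hi' : (i : ℕ) + 1 < n + 1 := by omega
    by_cases ha : IsIntVal (μ i) <;> by_cases hb : IsIntVal (μ ⟨i + 1, hi'⟩) <;>
      simp [Pfun, clockRays, clockRay, hi, hi', ha, hb]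
  · have hi' : ¬ (i : ℕ) + 1 < n + 1 := by omega
    by_cases ha : IsIntVal (μ i) <;> simp [Pfun, clockRays, clockRay, hi, hi', ha]

end clockRays

/-- The partition function is well-defined and produces a partition of `ℝ≥0`:
the intervals `g₀,…,gₙ` are pairwise disjoint, their union is `ℝ≥0`, and
`μᵢ ∈ gᵢ` for each `i`. -/
theorem pfun_partition (n : ℕ) (μ : Fin (n + 1) → ℝ)
    (h0 : μ 0 = 0) (hmono : StrictMono μ)
    (hfloor : ∀ i j, i ≠ j → ¬ IsIntVal (μ i) → ¬ IsIntVal (μ j) →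
      ⌊μ i⌋ ≠ ⌊μ j⌋) :
    (∀ i j, i ≠ j → Pfun n μ i ∩ Pfun n μ j = ∅) ∧
    (⋃ i, Pfun n μ i) = Set.Ici (0 : ℝ) ∧
    (∀ i, μ i ∈ Pfun n μ i) := by
  have hrays := antitone_clockRays hmono.monotone
  simp_rw [pfun_eq_clockRays_sdiff]
  refine ⟨fun i j hij => ?_, ?_, fun i => ⟨?_, ?_⟩⟩
  · exact disjoint_iff_inter_eq_empty.1
      (hrays.pairwise_disjoint_on_sdiff_succ (Fin.val_injective.ne hij))
  · have hlast : clockRays n μ (n + 1) = ∅ := by simp [clockRays]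
    rw [hrays.iUnion_fin_sdiff_succ, hlast, sdiff_empty,
      show clockRays n μ 0 = clockRay (μ 0) from clockRays_val 0, h0, clockRay_zero]
  · rw [clockRays_val]
    exact mem_clockRay_self (h0 ▸ hmono.monotone (Fin.zero_le i))
  · by_cases hi : (i : ℕ) + 1 < n + 1
    · have hlt : i < ⟨i + 1, hi⟩ := Fin.lt_def.2 (Nat.lt_succ_self _)
      simp only [clockRays, hi, dite_true]
      exact notMem_clockRay (hmono hlt) (hfloor i _ hlt.ne)
    · simp [clockRays, hi]
end

section
/- Distinguishability lemma: let ω₁, ω₂ be timed words with aligned suffixes e₁, e₂ constructed from suffix e under assumed last resets i₁, i₂. If A is a complete DOTA such that i₁ = k_A(ω₁) and i₂ = k_A(ω₂), and ω₁ and ω₂ reach the same location of A with the same clock value after alignment (i.e., the runs of ω₁ and ω₂ end in the same location), then A accepts ω₁·e₁ if and only if A accepts ω₂·e₂. Contrapositively, if the acceptance results on ω₁·e₁ and ω₂·e₂ differ, then ω₁ and ω₂ reach different locations in A. -/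
/-- A run of a one-clock timed automaton with transition relation `Δ`
(`(q, σ, guard, reset, q') ∈ Δ`) from a state `(q, ν)` over a timed word,
recording the trace of (reset bit, location, clock value) after each step. -/
inductive Run {Q A : Type} (Δ : Set (Q × A × Set ℝ × Bool × Q)) :
    (Q × ℝ) → List (A × ℝ) → List (Bool × Q × ℝ) → Prop
  | nil (s : Q × ℝ) : Run Δ s [] []
  | cons {q : Q} {v : ℝ} {a : A} {t : ℝ} {φ : Set ℝ} {b : Bool} {q' : Q}
      {ω : List (A × ℝ)} {tr : List (Bool × Q × ℝ)} :
      (q, a, φ, b, q') ∈ Δ → 0 ≤ t → v + t ∈ φ →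
      Run Δ (q', if b then 0 else v + t) ω tr →
      Run Δ (q, v) ((a, t) :: ω) ((b, q', if b then 0 else v + t) :: tr)

/-- The state reached at the end of a run with trace `tr` starting from `s`. -/
def endState {Q : Type} (s : Q × ℝ) (tr : List (Bool × Q × ℝ)) : Q × ℝ :=
  match tr.getLast? with
  | some (_, q, v) => (q, v)
  | none => s

/-- The sequence of reset bits of a run trace. -/
def resets {Q : Type} (tr : List (Bool × Q × ℝ)) : List Bool := tr.map (·.1)

/-- `k` is the last reset of a run with reset bits `bs` (1-based indexing):
`k = 0` if no step resets the clock, otherwise `k` is the largest index whose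
step resets the clock. -/
def IsLastReset (bs : List Bool) (k : ℕ) : Prop :=
  k ≤ bs.length ∧ (k = 0 ∨ bs.getD (k - 1) false = true) ∧
    ∀ j, k ≤ j → bs.getD j false = false

/-- `clockVal ω k` is the value of the clock after executing `ω` assuming the
last clock reset occurred at (1-based) position `k`: the sum of the delays
`t_{k+1} + ⋯ + t_n`. -/
def clockVal {A : Type} (ω : List (A × ℝ)) (k : ℕ) : ℝ :=
  ((ω.drop k).map (·.2)).sum

/-- The alignment construction: `align1 ν₁ ν₂ e` is the suffix attached to the
word with clock value `ν₁`, obtained from `e` by adding `ν₂ - ν₁` to the first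
delay when `ν₁ < ν₂`, and leaving `e` unchanged otherwise. -/
noncomputable def align1 {A : Type} (ν₁ ν₂ : ℝ) : List (A × ℝ) → List (A × ℝ)
  | [] => []
  | (a, t) :: rest =>
      if ν₁ < ν₂ then (a, t + (ν₂ - ν₁)) :: rest else (a, t) :: rest

/-- A timed word is accepted iff its run from the initial state ends in an
accepting location. -/
def Accepted {Q A : Type} (Δ : Set (Q × A × Set ℝ × Bool × Q)) (q0 : Q)
    (acc : Set Q) (ω : List (A × ℝ)) : Prop :=
  ∃ tr, Run Δ (q0, 0) ω tr ∧ (endState (q0, 0) tr).1 ∈ acc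

/-! By determinism, the run of `ω₁ · e₁` is the run of `ω₁` followed by a run of `e₁` from
`(q, ν₁)`, where `q` is the location reached by both words and `ν₁ = ν_c(ω₁, i₁)` is the clock
value there. Alignment makes the clock value at the first action of `e₁` (from `ν₁`) and of `e₂`
(from `ν₂`) the same, and `e₁`, `e₂` agree afterwards, so that run is also a run of `e₂` from
`(q, ν₂)`, with the same trace. Hence `ω₁ · e₁` and `ω₂ · e₂` end in the same location. -/

def IsDeterministic {Q A : Type} (Δ : Set (Q × A × Set ℝ × Bool × Q)) : Prop :=
  ∀ (q : Q) (a : A) (v : ℝ), 0 ≤ v →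
    {d : Set ℝ × Bool × Q | (q, a, d.1, d.2.1, d.2.2) ∈ Δ ∧ v ∈ d.1}.Subsingleton

theorem endState_cons {Q : Type} (s : Q × ℝ) (x : Bool × Q × ℝ) (tr : List (Bool × Q × ℝ)) :
    endState s (x :: tr) = endState x.2 tr := by
  cases tr with
  | nil => simp [endState]
  | cons y l =>
    obtain ⟨z, hz⟩ : ∃ z, (y :: l).getLast? = some z :=
      ⟨_, List.getLast?_eq_getLast_of_ne_nil (List.cons_ne_nil y l)⟩
    simp [endState, List.getLast?_cons_cons, hz]

theorem endState_append {Q : Type} (s : Q × ℝ) (l₁ l₂ : List (Bool × Q × ℝ)) :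
    endState s (l₁ ++ l₂) = endState (endState s l₁) l₂ := by
  induction l₁ generalizing s with
  | nil => simp [endState]
  | cons x l ih => rw [List.cons_append, endState_cons, endState_cons, ih]

theorem endState_fst_congr {Q : Type} {s s' : Q × ℝ} (h : s.1 = s'.1)
    (tr : List (Bool × Q × ℝ)) : (endState s tr).1 = (endState s' tr).1 := by
  unfold endState
  split <;> simp [h]

theorem IsLastReset.of_cons_zero {b : Bool} {bs : List Bool} (h : IsLastReset (b :: bs) 0) :
    b = false ∧ IsLastReset bs 0 :=
  ⟨h.2.2 0 le_rfl, Nat.zero_le _, Or.inl rfl, fun j _ => h.2.2 (j + 1) (Nat.zero_le _)⟩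

theorem IsLastReset.of_cons_succ {b : Bool} {bs : List Bool} {k : ℕ}
    (h : IsLastReset (b :: bs) (k + 1)) : IsLastReset bs k ∧ (k = 0 → b = true) := by
  obtain ⟨hlen, hlast, hafter⟩ := h
  have hlast : (b :: bs).getD k false = true := by simpa using hlast
  refine ⟨⟨by simpa using hlen, ?_, fun j hj => hafter (j + 1) (by omega)⟩, ?_⟩
  · rcases k with _ | k
    · exact Or.inl rfl
    · exact Or.inr (by simpa using hlast)
  · rintro rfl
    simpa using hlast

theorem resets_cons {Q : Type} (x : Bool × Q × ℝ) (tr : List (Bool × Q × ℝ)) :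
    resets (x :: tr) = x.1 :: resets tr := rfl

namespace Run

variable {Q A : Type} {Δ : Set (Q × A × Set ℝ × Bool × Q)}

theorem append {s : Q × ℝ} {ω e : List (A × ℝ)} {tr tr' : List (Bool × Q × ℝ)}
    (h : Run Δ s ω tr) (h' : Run Δ (endState s tr) e tr') :
    Run Δ s (ω ++ e) (tr ++ tr') := by
  induction h with
  | nil s => simpa [endState] using h'
  | cons hΔ ht hφ _ ih =>
    rw [endState_cons] at h'
    exact cons hΔ ht hφ (ih h')

theorem of_append {e : List (A × ℝ)} :
    ∀ {ω : List (A × ℝ)} {s : Q × ℝ} {tr : List (Bool × Q × ℝ)}, Run Δ s (ω ++ e) tr →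
      ∃ tr₁ tr₂, tr = tr₁ ++ tr₂ ∧ Run Δ s ω tr₁ ∧ Run Δ (endState s tr₁) e tr₂
  | [], s, tr, h => ⟨[], tr, rfl, nil s, by simpa [endState] using h⟩
  | (_, _) :: _, (_, _), _, cons hΔ ht hφ htail => by
    obtain ⟨tr₁, tr₂, rfl, h₁, h₂⟩ := of_append htail
    exact ⟨_ :: tr₁, tr₂, rfl, cons hΔ ht hφ h₁, by rwa [endState_cons]⟩

theorem trace_unique (hdet : IsDeterministic Δ) {s : Q × ℝ} {ω : List (A × ℝ)}
    {tr tr' : List (Bool × Q × ℝ)} (h : Run Δ s ω tr) (h' : Run Δ s ω tr') (hs : 0 ≤ s.2) :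
    tr = tr' := by
  induction h generalizing tr' with
  | nil => cases h'; rfl
  | @cons q v a t φ b q' ω tr hΔ ht hφ _ ih =>
    cases h' with
    | @cons _ _ _ _ φ' b' q'' _ _ hΔ' _ hφ' htail' =>
      have hvt : 0 ≤ v + t := add_nonneg hs ht
      have hd : (φ, b, q') = (φ', b', q'') :=
        hdet q a _ hvt (show (φ, b, q') ∈ _ from ⟨hΔ, hφ⟩) (show (φ', b', q'') ∈ _ from ⟨hΔ', hφ'⟩)
      obtain ⟨rfl, rfl, rfl⟩ := Prod.ext_iff.1 hd
      rw [ih htail' (by split <;> simp [hvt])]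

theorem endState_snd {s : Q × ℝ} {ω : List (A × ℝ)} {tr : List (Bool × Q × ℝ)} {k : ℕ}
    (h : Run Δ s ω tr) (hk : IsLastReset (resets tr) k) :
    (endState s tr).2 = (if k = 0 then s.2 else 0) + clockVal ω k := by
  induction h generalizing k with
  | nil =>
    obtain rfl : k = 0 := Nat.le_zero.1 hk.1
    simp [endState, clockVal]
  | @cons q v a t φ b q' ω tr _ _ _ _ ih =>
    rw [endState_cons]
    rw [resets_cons] at hk
    rcases k with _ | k
    · obtain ⟨hb, hk₀⟩ := IsLastReset.of_cons_zero hk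
      obtain rfl : b = false := hb
      rw [ih hk₀]
      simp [clockVal, add_assoc]
    · obtain ⟨hk', hb⟩ := IsLastReset.of_cons_succ hk
      rw [ih hk']
      rcases k with _ | k
      · obtain rfl : b = true := hb rfl
        simp [clockVal]
      · simp [clockVal]

theorem retime_head {q : Q} {u u' t t' : ℝ} {a : A} {e : List (A × ℝ)}
    {tr : List (Bool × Q × ℝ)} (hclock : u + t = u' + t') (ht' : 0 ≤ t')
    (h : Run Δ (q, u) ((a, t) :: e) tr) : Run Δ (q, u') ((a, t') :: e) tr := by
  cases h with
  | cons hΔ _ hφ htail =>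
    rw [hclock] at hφ htail ⊢
    exact cons hΔ ht' hφ htail

theorem align1_swap {s s' : Q × ℝ} (hq : s.1 = s'.1) {e : List (A × ℝ)}
    (he : ∀ p ∈ e, 0 ≤ p.2) {tr : List (Bool × Q × ℝ)} (h : Run Δ s (align1 s.2 s'.2 e) tr) :
    Run Δ s' (align1 s'.2 s.2 e) tr := by
  obtain ⟨q, v⟩ := s
  obtain ⟨q', v'⟩ := s'
  obtain rfl : q = q' := hq
  match e, h with
  | [], h => cases h; exact nil _
  | (a, t) :: e, h =>
    have ht : 0 ≤ t := he (a, t) List.mem_cons_self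
    simp only [align1] at h ⊢
    split_ifs at h ⊢ with h₁ h₂ h₂
    · linarith
    all_goals exact retime_head (by linarith) (by linarith) h

end Run

theorem Accepted.append_align1_swap {Q A : Type} {Δ : Set (Q × A × Set ℝ × Bool × Q)}
    {q0 : Q} {acc : Set Q} (hdet : IsDeterministic Δ) {ω₁ ω₂ : List (A × ℝ)}
    {tr₁ tr₂ : List (Bool × Q × ℝ)} (h₁ : Run Δ (q0, 0) ω₁ tr₁) (h₂ : Run Δ (q0, 0) ω₂ tr₂)
    (hloc : (endState (q0, 0) tr₁).1 = (endState (q0, 0) tr₂).1) {e : List (A × ℝ)}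
    (he : ∀ p ∈ e, 0 ≤ p.2)
    (hacc : Accepted Δ q0 acc
      (ω₁ ++ align1 (endState (q0, 0) tr₁).2 (endState (q0, 0) tr₂).2 e)) :
    Accepted Δ q0 acc (ω₂ ++ align1 (endState (q0, 0) tr₂).2 (endState (q0, 0) tr₁).2 e) := by
  obtain ⟨tr, hrun, hfinal⟩ := hacc
  obtain ⟨tr₁', tr', rfl, h₁', hsuffix⟩ := hrun.of_append
  obtain rfl := h₁'.trace_unique hdet h₁ le_rfl
  refine ⟨tr₂ ++ tr', h₂.append (hsuffix.align1_swap hloc he), ?_⟩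
  rwa [endState_append, ← endState_fst_congr hloc, ← endState_append]

theorem distinguishability_general {Q A : Type}
    (Δ : Set (Q × A × Set ℝ × Bool × Q)) (q0 : Q) (acc : Set Q)
    (hcomplete : ∀ (q : Q) (a : A) (v : ℝ), 0 ≤ v →
      ∃! d : Set ℝ × Bool × Q, (q, a, d.1, d.2.1, d.2.2) ∈ Δ ∧ v ∈ d.1)
    (ω₁ ω₂ : List (A × ℝ)) (tr₁ tr₂ : List (Bool × Q × ℝ))
    (h1 : Run Δ (q0, 0) ω₁ tr₁) (h2 : Run Δ (q0, 0) ω₂ tr₂)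
    (i₁ i₂ : ℕ)
    (hi₁ : IsLastReset (resets tr₁) i₁) (hi₂ : IsLastReset (resets tr₂) i₂)
    (hloc : (endState (q0, 0) tr₁).1 = (endState (q0, 0) tr₂).1)
    (e : List (A × ℝ)) (hepos : ∀ p ∈ e, 0 ≤ p.2) :
    (Accepted Δ q0 acc (ω₁ ++ align1 (clockVal ω₁ i₁) (clockVal ω₂ i₂) e) ↔
      Accepted Δ q0 acc (ω₂ ++ align1 (clockVal ω₂ i₂) (clockVal ω₁ i₁) e)) := by
  have hdet : IsDeterministic Δ := fun q a v hv _ hd _ hd' => (hcomplete q a v hv).unique hd hd'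
  have hclock₁ : clockVal ω₁ i₁ = (endState (q0, 0) tr₁).2 := by simp [h1.endState_snd hi₁]
  have hclock₂ : clockVal ω₂ i₂ = (endState (q0, 0) tr₂).2 := by simp [h2.endState_snd hi₂]
  rw [hclock₁, hclock₂]
  exact ⟨Accepted.append_align1_swap hdet h1 h2 hloc hepos,
    Accepted.append_align1_swap hdet h2 h1 hloc.symm hepos⟩

/-- Distinguishability lemma: let `ω₁, ω₂` be timed words whose runs on a
complete DOTA `A` have last resets `i₁, i₂` and end in the same location.
Then `A` accepts `ω₁·e₁` iff it accepts `ω₂·e₂`, where `e₁, e₂` are the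
aligned suffixes built from `e` using the clock values `ν_c(ω₁,i₁)` and
`ν_c(ω₂,i₂)`.  (Contrapositively, differing acceptance results imply the two
words reach different locations.) -/
theorem distinguishability {Q A : Type}
    (Δ : Set (Q × A × Set ℝ × Bool × Q)) (q0 : Q) (acc : Set Q)
    (hcomplete : ∀ (q : Q) (a : A) (v : ℝ), 0 ≤ v →
      ∃! d : Set ℝ × Bool × Q, (q, a, d.1, d.2.1, d.2.2) ∈ Δ ∧ v ∈ d.1)
    (ω₁ ω₂ : List (A × ℝ)) (tr₁ tr₂ : List (Bool × Q × ℝ))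
    (h1 : Run Δ (q0, 0) ω₁ tr₁) (h2 : Run Δ (q0, 0) ω₂ tr₂)
    (i₁ i₂ : ℕ)
    (hi₁ : IsLastReset (resets tr₁) i₁) (hi₂ : IsLastReset (resets tr₂) i₂)
    (hloc : (endState (q0, 0) tr₁).1 = (endState (q0, 0) tr₂).1)
    (e : List (A × ℝ)) (he : e ≠ []) (hepos : ∀ p ∈ e, 0 ≤ p.2) :
    (Accepted Δ q0 acc (ω₁ ++ align1 (clockVal ω₁ i₁) (clockVal ω₂ i₂) e) ↔
      Accepted Δ q0 acc (ω₂ ++ align1 (clockVal ω₂ i₂) (clockVal ω₁ i₁) e)) :=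
  distinguishability_general Δ q0 acc hcomplete ω₁ ω₂ tr₁ tr₂ h1 h2 i₁ i₂ hi₁ hi₂ hloc e hepos
end

section
/- Characterization of valid last-reset combinations: for timed words ω₁, ω₂ with longest common prefix of length m, the set C(ω₁,ω₂) = {(i₁,i₂) : 0 ≤ i₁ ≤ |ω₁|, 0 ≤ i₂ ≤ |ω₂|, and (i₁ ≤ m ∧ i₂ ≤ m → i₁ = i₂)} contains the pair (k_A(ω₁), k_A(ω₂)) for every complete DOTA A. That is, the true last resets of ω₁ and ω₂ in any complete DOTA always form a valid combination. -/
namespace Run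

variable {Q A : Type} {Δ : Set (Q × A × Set ℝ × Bool × Q)}

theorem length_eq {s : Q × ℝ} {ω : List (A × ℝ)} {tr : List (Bool × Q × ℝ)}
    (h : Run Δ s ω tr) : tr.length = ω.length := by
  induction h with
  | nil => rfl
  | cons _ _ _ _ ih => simp [ih]

theorem take_eq_of_take_eq (hdet : IsDeterministic Δ) {s : Q × ℝ} (hs : 0 ≤ s.2)
    {ω₁ ω₂ : List (A × ℝ)} {tr₁ tr₂ : List (Bool × Q × ℝ)}
    (h₁ : Run Δ s ω₁ tr₁) (h₂ : Run Δ s ω₂ tr₂) {m : ℕ}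
    (hω : ω₁.take m = ω₂.take m) : tr₁.take m = tr₂.take m := by
  induction h₁ generalizing ω₂ tr₂ m with
  | nil => cases h₂ <;> cases m <;> simp_all
  | @cons q v a t φ b q' ω tr hΔ ht hφ _ ih =>
    cases m with
    | zero => rfl
    | succ m =>
      cases h₂ with
      | nil => simp at hω
      | cons hΔ' _ hφ' hrun' =>
        simp only [List.take_succ_cons, List.cons.injEq, Prod.mk.injEq] at hω
        obtain ⟨⟨rfl, rfl⟩, hω⟩ := hω
        have hv : 0 ≤ v + t := add_nonneg hs ht
        obtain ⟨-, hb⟩ := Prod.mk.inj <|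
          hdet q a (v + t) hv (x := (_, _, _)) ⟨hΔ, hφ⟩ (y := (_, _, _)) ⟨hΔ', hφ'⟩
        obtain ⟨rfl, rfl⟩ := Prod.mk.inj hb
        have hv' : 0 ≤ if b then (0 : ℝ) else v + t := by split_ifs <;> linarith
        simp [ih hv' hrun' hω]

end Run

theorem IsLastReset.le_of_take_eq {bs₁ bs₂ : List Bool} {k₁ k₂ m : ℕ}
    (hk₁ : IsLastReset bs₁ k₁) (hk₂ : IsLastReset bs₂ k₂)
    (htake : bs₁.take m = bs₂.take m) (hk₂m : k₂ ≤ m) : k₂ ≤ k₁ := by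
  by_contra! hlt
  have hreset : bs₂.getD (k₂ - 1) false = true := hk₂.2.1.resolve_left (by omega)
  have hno_reset : bs₁.getD (k₂ - 1) false = false := hk₁.2.2 _ (by omega)
  have hagree : bs₁.getD (k₂ - 1) false = bs₂.getD (k₂ - 1) false := by
    rw [List.getD_eq_getElem?_getD, List.getD_eq_getElem?_getD,
      ← List.getElem?_take_of_lt (by omega : k₂ - 1 < m), htake, List.getElem?_take_of_lt (by omega)]
  simp_all

theorem IsLastReset.eq_of_take_eq {bs₁ bs₂ : List Bool} {k₁ k₂ m : ℕ}
    (hk₁ : IsLastReset bs₁ k₁) (hk₂ : IsLastReset bs₂ k₂)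
    (htake : bs₁.take m = bs₂.take m) (hk₁m : k₁ ≤ m) (hk₂m : k₂ ≤ m) : k₁ = k₂ :=
  le_antisymm (hk₂.le_of_take_eq hk₁ htake.symm hk₁m) (hk₁.le_of_take_eq hk₂ htake hk₂m)

theorem true_resets_valid_combination_general {Q A : Type}
    (Δ : Set (Q × A × Set ℝ × Bool × Q)) (q0 : Q)
    (hcomplete : ∀ (q : Q) (a : A) (v : ℝ), 0 ≤ v →
      ∃! d : Set ℝ × Bool × Q, (q, a, d.1, d.2.1, d.2.2) ∈ Δ ∧ v ∈ d.1)
    (ω₁ ω₂ : List (A × ℝ)) (tr₁ tr₂ : List (Bool × Q × ℝ))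
    (h1 : Run Δ (q0, 0) ω₁ tr₁) (h2 : Run Δ (q0, 0) ω₂ tr₂)
    (m : ℕ)
    (htake : ω₁.take m = ω₂.take m)
    (k₁ k₂ : ℕ)
    (hk₁ : IsLastReset (resets tr₁) k₁) (hk₂ : IsLastReset (resets tr₂) k₂) :
    k₁ ≤ ω₁.length ∧ k₂ ≤ ω₂.length ∧ (k₁ ≤ m → k₂ ≤ m → k₁ = k₂) := by
  have hdet : IsDeterministic Δ := fun q a v hv _ hd _ hd' => (hcomplete q a v hv).unique hd hd'
  have hresets : (resets tr₁).take m = (resets tr₂).take m := by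
    simp only [resets, ← List.map_take, h1.take_eq_of_take_eq hdet le_rfl h2 htake]
  refine ⟨?_, ?_, hk₁.eq_of_take_eq hk₂ hresets⟩
  · simpa [resets, h1.length_eq] using hk₁.1
  · simpa [resets, h2.length_eq] using hk₂.1

/-- The true last resets always form a valid last-reset combination: for timed
words `ω₁, ω₂` whose longest common prefix has length `m`, and any complete
DOTA `A`, the pair `(k_A(ω₁), k_A(ω₂))` lies in `C(ω₁,ω₂)`, i.e.
`k_A(ω₁) ≤ |ω₁|`, `k_A(ω₂) ≤ |ω₂|`, and if both are `≤ m` then they are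
equal. -/
theorem true_resets_valid_combination {Q A : Type}
    (Δ : Set (Q × A × Set ℝ × Bool × Q)) (q0 : Q)
    (hcomplete : ∀ (q : Q) (a : A) (v : ℝ), 0 ≤ v →
      ∃! d : Set ℝ × Bool × Q, (q, a, d.1, d.2.1, d.2.2) ∈ Δ ∧ v ∈ d.1)
    (ω₁ ω₂ : List (A × ℝ)) (tr₁ tr₂ : List (Bool × Q × ℝ))
    (h1 : Run Δ (q0, 0) ω₁ tr₁) (h2 : Run Δ (q0, 0) ω₂ tr₂)
    (m : ℕ) (hm₁ : m ≤ ω₁.length) (hm₂ : m ≤ ω₂.length)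
    (htake : ω₁.take m = ω₂.take m)
    (hmax : m < ω₁.length → m < ω₂.length → ω₁[m]? ≠ ω₂[m]?)
    (k₁ k₂ : ℕ)
    (hk₁ : IsLastReset (resets tr₁) k₁) (hk₂ : IsLastReset (resets tr₂) k₂) :
    k₁ ≤ ω₁.length ∧ k₂ ≤ ω₂.length ∧ (k₁ ≤ m → k₂ ≤ m → k₁ = k₂) :=
  true_resets_valid_combination_general Δ q0 hcomplete ω₁ ω₂ tr₁ tr₂ h1 h2 m htake k₁ k₂ hk₁ hk₂
end

section
/- Soundness of Constraint C₂ (consistency): let A be a complete DOTA, and ω₁, ω₂ timed words whose runs in A end at the same location, with last resets i = k_A(ω₁) and j = k_A(ω₂). Let ω₁' = ω₁·(σ,t₁) and ω₂' = ω₂·(σ,t₂), and suppose the clock values ν_c(ω₁,i)+t₁ and ν_c(ω₂,j)+t₂ lie in the same region (with respect to the maximum constant of A). Then the transitions taken by the last actions of ω₁' and ω₂' in A are identical; in particular the reset bits are equal and ω₁' and ω₂' reach the same location. -/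
/-- The regions of a one-clock timed automaton with maximum constant `κ`. -/
def Regions (κ : ℕ) : Set (Set ℝ) :=
  {r | (∃ n : ℕ, n ≤ κ ∧ r = Set.Icc (n : ℝ) n) ∨
       (∃ n : ℕ, n < κ ∧ r = Set.Ioo (n : ℝ) ((n : ℝ) + 1)) ∨
       r = Set.Ioi (κ : ℝ)}

/-- Two clock values lie in the same region (w.r.t. maximum constant `κ`). -/
def SameRegion (κ : ℕ) (x y : ℝ) : Prop :=
  ∃ r ∈ Regions κ, x ∈ r ∧ y ∈ r

/-- `φ` is an integer-bounded interval guard with endpoints natural numbers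
bounded by `κ`, or with `∞` as right endpoint. -/
def IntervalGuard (κ : ℕ) (φ : Set ℝ) : Prop :=
  ∃ lo : ℕ, lo ≤ κ ∧
    ((∃ hi : ℕ, hi ≤ κ ∧
        (φ = Set.Icc (lo : ℝ) hi ∨ φ = Set.Ico (lo : ℝ) hi ∨
         φ = Set.Ioc (lo : ℝ) hi ∨ φ = Set.Ioo (lo : ℝ) hi)) ∨
     φ = Set.Ici (lo : ℝ) ∨ φ = Set.Ioi (lo : ℝ))

/-!
Two clock values in the same region compare in the same way with every integer `n ≤ κ`, and
membership in an integer-bounded guard is decided by such comparisons alone; so a guard that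
admits one of the two values admits the other. The two enabled `σ`-transitions out of the common
location then share a nonnegative clock value in their guards, which determinism allows only if
they are the same transition.
-/

section Regions

variable {κ n : ℕ} {x y : ℝ}

theorem SameRegion.nonneg_right (h : SameRegion κ x y) : 0 ≤ y := by
  obtain ⟨r, hr, -, hy⟩ := h
  rcases hr with ⟨m, -, rfl⟩ | ⟨m, -, rfl⟩ | rfl
  · exact (Nat.cast_nonneg m).trans hy.1
  · exact (Nat.cast_nonneg m).trans hy.1.le
  · exact (Nat.cast_nonneg κ).trans hy.le

theorem SameRegion.compare_natCast_eq (h : SameRegion κ x y) (hn : n ≤ κ) :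
    compare x n = compare y n := by
  obtain ⟨r, hr, hx, hy⟩ := h
  rcases hr with ⟨m, -, rfl⟩ | ⟨m, -, rfl⟩ | rfl
  · rw [Set.Icc_self, Set.mem_singleton_iff] at hx hy
    rw [hx, hy]
  · rcases le_or_gt n m with hnm | hmn
    · have hnm' : (n : ℝ) ≤ m := by exact_mod_cast hnm
      rw [compare_gt_iff_gt.2 (hnm'.trans_lt hx.1), compare_gt_iff_gt.2 (hnm'.trans_lt hy.1)]
    · have hmn' : (m : ℝ) + 1 ≤ n := by exact_mod_cast hmn
      rw [compare_lt_iff_lt.2 (hx.2.trans_le hmn'), compare_lt_iff_lt.2 (hy.2.trans_le hmn')]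
  · have hn' : (n : ℝ) ≤ κ := by exact_mod_cast hn
    rw [compare_gt_iff_gt.2 (hn'.trans_lt hx), compare_gt_iff_gt.2 (hn'.trans_lt hy)]

theorem IntervalGuard.mem_iff_of_sameRegion {φ : Set ℝ} (hφ : IntervalGuard κ φ)
    (h : SameRegion κ x y) : x ∈ φ ↔ y ∈ φ := by
  have hle : ∀ n ≤ κ, (x ≤ n ↔ y ≤ n) := fun n hn => by
    rw [← compare_le_iff_le, ← compare_le_iff_le, h.compare_natCast_eq hn]
  have hlt : ∀ n ≤ κ, (x < n ↔ y < n) := fun n hn => by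
    rw [← compare_lt_iff_lt, ← compare_lt_iff_lt, h.compare_natCast_eq hn]
  have hge : ∀ n ≤ κ, ((n : ℝ) ≤ x ↔ (n : ℝ) ≤ y) := fun n hn => by
    rw [← compare_ge_iff_ge, ← compare_ge_iff_ge, h.compare_natCast_eq hn]
  have hgt : ∀ n ≤ κ, ((n : ℝ) < x ↔ (n : ℝ) < y) := fun n hn => by
    rw [← compare_gt_iff_gt, ← compare_gt_iff_gt, h.compare_natCast_eq hn]
  rcases hφ with ⟨lo, hlo, ⟨hi, hhi, rfl | rfl | rfl | rfl⟩ | rfl | rfl⟩ <;>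
    simp only [Set.mem_Icc, Set.mem_Ico, Set.mem_Ioc, Set.mem_Ioo, Set.mem_Ici, Set.mem_Ioi, *]

end Regions

theorem constraint_C2_sound_general {Q A : Type}
    (Δ : Set (Q × A × Set ℝ × Bool × Q)) (q0 : Q) (κ : ℕ)
    (hdet : ∀ q a φ b q' φ' b' q'',
      (q, a, φ, b, q') ∈ Δ → (q, a, φ', b', q'') ∈ Δ →
      (φ, b, q') ≠ (φ', b', q'') → φ ∩ φ' ∩ Set.Ici (0 : ℝ) = ∅)
    (hguards : ∀ q a φ b q', (q, a, φ, b, q') ∈ Δ → IntervalGuard κ φ)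
    (ω₁ ω₂ : List (A × ℝ)) (tr₁ tr₂ : List (Bool × Q × ℝ))
    (hloc : (endState (q0, 0) tr₁).1 = (endState (q0, 0) tr₂).1)
    (i j : ℕ)
    (σ : A) (t₁ t₂ : ℝ)
    (hreg : SameRegion κ (clockVal ω₁ i + t₁) (clockVal ω₂ j + t₂)) :
    ∀ φ₁ b₁ q₁' φ₂ b₂ q₂',
      ((endState (q0, 0) tr₁).1, σ, φ₁, b₁, q₁') ∈ Δ →
      clockVal ω₁ i + t₁ ∈ φ₁ →
      ((endState (q0, 0) tr₂).1, σ, φ₂, b₂, q₂') ∈ Δ →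
      clockVal ω₂ j + t₂ ∈ φ₂ →
      (φ₁, b₁, q₁') = (φ₂, b₂, q₂') := by
  intro φ₁ b₁ q₁' φ₂ b₂ q₂' hΔ₁ hx₁ hΔ₂ hy₂
  by_contra hne
  rw [hloc] at hΔ₁
  have hy₁ : clockVal ω₂ j + t₂ ∈ φ₁ :=
    ((hguards _ _ _ _ _ hΔ₁).mem_iff_of_sameRegion hreg).1 hx₁
  have hdisj := hdet _ _ _ _ _ _ _ _ hΔ₁ hΔ₂ hne
  exact hdisj.subset ⟨⟨hy₁, hy₂⟩, hreg.nonneg_right⟩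

/-- Soundness of Constraint C₂ (consistency): let `A` be a complete DOTA whose
guards are integer-bounded intervals with maximum constant `κ`, and let
`ω₁, ω₂` be timed words whose runs end in the same location, with last resets
`i, j`.  If the clock values `ν_c(ω₁,i) + t₁` and `ν_c(ω₂,j) + t₂` lie in the
same region, then the transitions taken by the last actions of
`ω₁·(σ,t₁)` and `ω₂·(σ,t₂)` are identical: same guard, same reset bit and same
target location. -/
theorem constraint_C2_sound {Q A : Type}
    (Δ : Set (Q × A × Set ℝ × Bool × Q)) (q0 : Q) (κ : ℕ)
    (hdet : ∀ q a φ b q' φ' b' q'',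
      (q, a, φ, b, q') ∈ Δ → (q, a, φ', b', q'') ∈ Δ →
      (φ, b, q') ≠ (φ', b', q'') → φ ∩ φ' ∩ Set.Ici (0 : ℝ) = ∅)
    (hguards : ∀ q a φ b q', (q, a, φ, b, q') ∈ Δ → IntervalGuard κ φ)
    (ω₁ ω₂ : List (A × ℝ)) (tr₁ tr₂ : List (Bool × Q × ℝ))
    (h1 : Run Δ (q0, 0) ω₁ tr₁) (h2 : Run Δ (q0, 0) ω₂ tr₂)
    (hloc : (endState (q0, 0) tr₁).1 = (endState (q0, 0) tr₂).1)
    (i j : ℕ)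
    (hi : IsLastReset (resets tr₁) i) (hj : IsLastReset (resets tr₂) j)
    (σ : A) (t₁ t₂ : ℝ) (ht₁ : 0 ≤ t₁) (ht₂ : 0 ≤ t₂)
    (hreg : SameRegion κ (clockVal ω₁ i + t₁) (clockVal ω₂ j + t₂)) :
    ∀ φ₁ b₁ q₁' φ₂ b₂ q₂',
      ((endState (q0, 0) tr₁).1, σ, φ₁, b₁, q₁') ∈ Δ →
      clockVal ω₁ i + t₁ ∈ φ₁ →
      ((endState (q0, 0) tr₂).1, σ, φ₂, b₂, q₂') ∈ Δ →
      clockVal ω₂ j + t₂ ∈ φ₂ →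
      (φ₁, b₁, q₁') = (φ₂, b₂, q₂') :=
  constraint_C2_sound_general Δ q0 κ hdet hguards ω₁ ω₂ tr₁ tr₂ hloc i j σ t₁ t₂ hreg
end

section
/- Guards respect regions: any clock constraint φ of the form of a conjunction of comparisons c ⋈ m with integer constants m ≤ κ (equivalently, an integer-bounded interval with endpoints in ℕ ∪ {∞} bounded by κ), either contains a given region entirely or is disjoint from it. That is, for every region r of the region partition with maximum constant κ and every such guard φ, either r ⊆ φ or r ∩ φ = ∅. -/
/-!
Every region lies entirely below, at, or above each natural number `n ≤ κ`, so it is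
either contained in or disjoint from each of the four half-lines with endpoint `n`.
Every guard is an intersection of at most two such half-lines, and the property
"contained in or disjoint from" is stable under intersection.
-/

open Set

section SubsetOrDisjoint

variable {α : Type*}

def SubsetOrDisjoint (r A : Set α) : Prop :=
  r ⊆ A ∨ Disjoint r A

theorem SubsetOrDisjoint.inter {r A B : Set α} (hA : SubsetOrDisjoint r A)
    (hB : SubsetOrDisjoint r B) : SubsetOrDisjoint r (A ∩ B) := by
  rcases hA with hA | hA
  · rcases hB with hB | hB
    · exact Or.inl (subset_inter hA hB)
    · exact Or.inr (hB.mono_right inter_subset_right)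
  · exact Or.inr (hA.mono_right inter_subset_left)

theorem SubsetOrDisjoint.compl {r A : Set α} (h : SubsetOrDisjoint r A) :
    SubsetOrDisjoint r Aᶜ := by
  rw [SubsetOrDisjoint, subset_compl_iff_disjoint_right, disjoint_compl_right_iff_subset]
  exact h.symm

variable [LinearOrder α] {r : Set α} {a : α}

theorem subsetOrDisjoint_Ici (h : r ⊆ Iio a ∨ r ⊆ {a} ∨ r ⊆ Ioi a) :
    SubsetOrDisjoint r (Ici a) := by
  rcases h with h | h | h
  · exact Or.inr (disjoint_of_subset_left h (compl_Ici (a := a) ▸ disjoint_compl_left))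
  · exact Or.inl (h.trans (singleton_subset_iff.2 self_mem_Ici))
  · exact Or.inl (h.trans Ioi_subset_Ici_self)

theorem subsetOrDisjoint_Iic (h : r ⊆ Iio a ∨ r ⊆ {a} ∨ r ⊆ Ioi a) :
    SubsetOrDisjoint r (Iic a) := by
  rcases h with h | h | h
  · exact Or.inl (h.trans Iio_subset_Iic_self)
  · exact Or.inl (h.trans (singleton_subset_iff.2 self_mem_Iic))
  · exact Or.inr (disjoint_of_subset_left h (compl_Iic (a := a) ▸ disjoint_compl_left))

theorem subsetOrDisjoint_Ioi (h : r ⊆ Iio a ∨ r ⊆ {a} ∨ r ⊆ Ioi a) :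
    SubsetOrDisjoint r (Ioi a) :=
  compl_Iic (a := a) ▸ (subsetOrDisjoint_Iic h).compl

theorem subsetOrDisjoint_Iio (h : r ⊆ Iio a ∨ r ⊆ {a} ∨ r ⊆ Ioi a) :
    SubsetOrDisjoint r (Iio a) :=
  compl_Ici (a := a) ▸ (subsetOrDisjoint_Ici h).compl

end SubsetOrDisjoint

theorem subset_Iio_or_subset_singleton_or_subset_Ioi_of_mem_regions {κ n : ℕ} {r : Set ℝ}
    (hr : r ∈ Regions κ) (hn : n ≤ κ) :
    r ⊆ Iio (n : ℝ) ∨ r ⊆ {(n : ℝ)} ∨ r ⊆ Ioi (n : ℝ) := by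
  rcases hr with ⟨m, -, rfl⟩ | ⟨m, -, rfl⟩ | rfl
  · rw [Icc_self, singleton_subset_iff, singleton_subset_iff, singleton_subset_iff,
      mem_Iio, mem_singleton_iff, mem_Ioi, Nat.cast_lt, Nat.cast_inj, Nat.cast_lt]
    exact lt_trichotomy m n
  · rcases le_or_gt n m with hnm | hmn
    · refine Or.inr (Or.inr (Ioo_subset_Ioi_self.trans (Ioi_subset_Ioi ?_)))
      exact_mod_cast hnm
    · refine Or.inl (Ioo_subset_Iio_self.trans (Iio_subset_Iio ?_))
      exact_mod_cast hmn
  · exact Or.inr (Or.inr (Ioi_subset_Ioi (by exact_mod_cast hn)))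

/-- Guards respect regions: an integer-bounded interval guard (endpoints
natural numbers `≤ κ` or `∞`) either contains a region entirely or is disjoint
from it. -/
theorem guard_respects_regions (κ : ℕ) (r φ : Set ℝ)
    (hr : r ∈ Regions κ) (hφ : IntervalGuard κ φ) :
    r ⊆ φ ∨ r ∩ φ = ∅ := by
  rw [← disjoint_iff_inter_eq_empty]
  have side {n : ℕ} (hn : n ≤ κ) :=
    subset_Iio_or_subset_singleton_or_subset_Ioi_of_mem_regions hr hn
  obtain ⟨lo, hlo, ⟨hi, hhi, rfl | rfl | rfl | rfl⟩ | rfl | rfl⟩ := hφ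
  · exact Ici_inter_Iic (a := (lo : ℝ)) ▸
      (subsetOrDisjoint_Ici (side hlo)).inter (subsetOrDisjoint_Iic (side hhi))
  · exact Ici_inter_Iio (a := (lo : ℝ)) ▸
      (subsetOrDisjoint_Ici (side hlo)).inter (subsetOrDisjoint_Iio (side hhi))
  · exact Ioi_inter_Iic (a := (lo : ℝ)) ▸
      (subsetOrDisjoint_Ioi (side hlo)).inter (subsetOrDisjoint_Iic (side hhi))
  · exact Ioi_inter_Iio (a := (lo : ℝ)) ▸
      (subsetOrDisjoint_Ioi (side hlo)).inter (subsetOrDisjoint_Iio (side hhi))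
  · exact subsetOrDisjoint_Ici (side hlo)
  · exact subsetOrDisjoint_Ioi (side hlo)
end
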